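/- Let A be an n×n complex matrix with eigenvalue λ, set A₀ := A−λI, and suppose A₀ has SVD with singular values σ₁ ≥ ... ≥ σ_{n−1} > 0 and σₙ = 0, with pseudoinverse A₀† and singular vectors uₙ, vₙ. Let ε ∈ (0,1). If z ∈ ℂ satisfies |z−λ| < σ_{n−1} and |z−λ|·(|uₙᴴvₙ| + |z−λ|/σ_{n−1}) ≤ ε·(σ_{n−1} − |z−λ|), then σₙ(A−zI)/σ_{n−1}(A−zI) ≤ ε, i.e., the relative distance of (A−zI)⁻¹ to the nearest rank-one matrix is at most ε. -/

import Mathlib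

open Matrix

/-- The list of singular values of a square complex matrix, sorted increasingly. -/
noncomputable def svalsList {m : Type*} [Fintype m] [DecidableEq m] (M : Matrix m m ℂ) : List ℝ :=
  (Finset.univ.val.map fun i =>
    Real.sqrt (((Matrix.isHermitian_conjTranspose_mul_self M)).eigenvalues i)).sort (· ≤ ·)

/-- `sval M j` is the `j`-th largest singular value of `M` (1-indexed, so
`sval M 1` is the largest and `sval M (card m)` the smallest). -/
noncomputable def sval {m : Type*} [Fintype m] [DecidableEq m] (M : Matrix m m ℂ) (j : ℕ) : ℝ :=
  (svalsList M).getD (Fintype.card m - j) 0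

/-- `S_ε(A)`: points `z` where `z` is an eigenvalue of `A`, or `A - zI` is invertible and
the ratio of the second largest to the largest singular value of `(A - zI)⁻¹` is `< ε`. -/
noncomputable def Sset {m : Type*} [Fintype m] [DecidableEq m] (ε : ℝ)
    (A : Matrix m m ℂ) : Set ℂ :=
  {z | ¬ IsUnit (A - z • 1) ∨
    (IsUnit (A - z • 1) ∧ sval (A - z • 1)⁻¹ 2 / sval (A - z • 1)⁻¹ 1 < ε)}


section SvalHelpers
variable {m : Type*} [Fintype m] [DecidableEq m]

lemma svalsList_coe (M : Matrix m m ℂ) : (svalsList M : Multiset ℝ) =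
    Finset.univ.val.map (fun i =>
      Real.sqrt ((isHermitian_conjTranspose_mul_self M).eigenvalues i)) :=
  Multiset.sort_eq _ _

lemma svalsList_sorted (M : Matrix m m ℂ) : (svalsList M).Pairwise (· ≤ ·) :=
  Multiset.pairwise_sort _ _

lemma svalsList_length (M : Matrix m m ℂ) : (svalsList M).length = Fintype.card m := by
  rw [svalsList, Multiset.length_sort, Multiset.card_map]
  rfl

lemma mem_svalsList {M : Matrix m m ℂ} {a : ℝ} : a ∈ svalsList M ↔
    ∃ i, Real.sqrt ((isHermitian_conjTranspose_mul_self M).eigenvalues i) = a := by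
  rw [svalsList, Multiset.mem_sort]
  simp

lemma svalsList_countP (M : Matrix m m ℂ) (p : ℝ → Prop) [DecidablePred p] :
    Multiset.countP p (svalsList M : Multiset ℝ) =
      (Finset.univ.filter fun i =>
        p (Real.sqrt ((isHermitian_conjTranspose_mul_self M).eigenvalues i))).card := by
  rw [svalsList_coe, Multiset.countP_map]
  rfl

end SvalHelpers

section Helpers
set_option linter.unusedSectionVars false

variable {m : Type*} [Fintype m] [DecidableEq m]

noncomputable def nsq (v : m → ℂ) : ℝ := ∑ i, Complex.normSq (v i)

lemma nsq_nonneg (v : m → ℂ) : 0 ≤ nsq v :=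
  Finset.sum_nonneg fun i _ => Complex.normSq_nonneg _

lemma dot_self_eq_nsq (v : m → ℂ) : star v ⬝ᵥ v = (nsq v : ℂ) := by
  simp [dotProduct, nsq, Complex.normSq_eq_conj_mul_self]

noncomputable def Nrm (v : m → ℂ) : ℝ := Real.sqrt (nsq v)

lemma nsq_eq_sq (v : m → ℂ) : nsq v = Nrm v ^ 2 := by
  rw [Nrm, Real.sq_sqrt (nsq_nonneg v)]

lemma Nrm_eq_norm (v : m → ℂ) : Nrm v = ‖(WithLp.equiv 2 (m → ℂ)).symm v‖ := by
  rw [EuclideanSpace.norm_eq, Nrm, nsq]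
  congr 1
  refine Finset.sum_congr rfl fun i _ => ?_
  simp [Complex.sq_norm]

lemma Nrm_nonneg (v : m → ℂ) : 0 ≤ Nrm v := Real.sqrt_nonneg _

lemma Nrm_add_le (a b : m → ℂ) : Nrm (a + b) ≤ Nrm a + Nrm b := by
  simp only [Nrm_eq_norm]
  rw [show (WithLp.equiv 2 (m → ℂ)).symm (a + b)
      = (WithLp.equiv 2 (m → ℂ)).symm a + (WithLp.equiv 2 (m → ℂ)).symm b from rfl]
  exact norm_add_le _ _

lemma nsq_smul (c : ℂ) (v : m → ℂ) : nsq (c • v) = Complex.normSq c * nsq v := by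
  simp [nsq, Finset.mul_sum, Complex.normSq_mul]

lemma Nrm_smul (c : ℂ) (v : m → ℂ) : Nrm (c • v) = ‖c‖ * Nrm v := by
  rw [Nrm, nsq_smul, ← Complex.sq_norm, Real.sqrt_mul (sq_nonneg _),
    Real.sqrt_sq (norm_nonneg c)]; rfl

lemma nsq_neg (v : m → ℂ) : nsq (-v) = nsq v := by simp [nsq]

lemma Nrm_neg (v : m → ℂ) : Nrm (-v) = Nrm v := by rw [Nrm, nsq_neg, Nrm]

lemma Nrm_sub_ge (a b : m → ℂ) : Nrm a - Nrm b ≤ Nrm (a - b) := by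
  have := Nrm_add_le (a - b) b
  simp only [sub_add_cancel] at this
  linarith

set_option linter.unusedSectionVars false

lemma dot_mulVec_assoc (u : m → ℂ) (A B : Matrix m m ℂ) (v : m → ℂ) :
    u ⬝ᵥ (A * B) *ᵥ v = (u ᵥ* A) ⬝ᵥ (B *ᵥ v) := by
  rw [dotProduct_mulVec, ← vecMul_vecMul, ← dotProduct_mulVec]

lemma unitary_dot (W : Matrix m m ℂ) (hW : W ∈ Matrix.unitaryGroup m ℂ) (a b : m → ℂ) :
    star (W *ᵥ a) ⬝ᵥ (W *ᵥ b) = star a ⬝ᵥ b := by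
  rw [star_mulVec, dotProduct_mulVec, vecMul_vecMul, ← Matrix.star_eq_conjTranspose,
    (Matrix.mem_unitaryGroup_iff').mp hW, vecMul_one]

lemma nsq_mulVec_unitary (W : Matrix m m ℂ) (hW : W ∈ Matrix.unitaryGroup m ℂ) (v : m → ℂ) :
    nsq (W *ᵥ v) = nsq v := by
  have h := unitary_dot W hW v v
  rw [dot_self_eq_nsq, dot_self_eq_nsq] at h
  exact_mod_cast h

lemma nsq_mulVec_eq_dot (M : Matrix m m ℂ) (x : m → ℂ) :
    (nsq (M *ᵥ x) : ℂ) = star x ⬝ᵥ ((Mᴴ * M) *ᵥ x) := by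
  rw [← dot_self_eq_nsq, star_mulVec, ← dotProduct_mulVec, mulVec_mulVec]

lemma nsq_add_of_orth (a b : m → ℂ) (h : star a ⬝ᵥ b = 0) :
    nsq (a + b) = nsq a + nsq b := by
  have hba : star b ⬝ᵥ a = 0 := by
    rw [star_dotProduct, h, star_zero]
  have : star (a + b) ⬝ᵥ (a + b) = star a ⬝ᵥ a + star b ⬝ᵥ b := by
    rw [star_add, add_dotProduct, dotProduct_add, dotProduct_add, h, hba]
    ring
  rw [dot_self_eq_nsq, dot_self_eq_nsq, dot_self_eq_nsq] at this
  exact_mod_cast this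

lemma key1 (M : Matrix m m ℂ) (t : m → ℂ) :
    nsq (M *ᵥ ((((isHermitian_conjTranspose_mul_self M).eigenvectorUnitary : unitaryGroup m ℂ) :
        Matrix m m ℂ) *ᵥ t))
      = ∑ i, (isHermitian_conjTranspose_mul_self M).eigenvalues i * Complex.normSq (t i) := by
  set hH := isHermitian_conjTranspose_mul_self M with hHdef
  set W : Matrix m m ℂ := ((hH.eigenvectorUnitary : unitaryGroup m ℂ) : Matrix m m ℂ) with hW
  have hWu : W ∈ Matrix.unitaryGroup m ℂ := (hH.eigenvectorUnitary).2
  have hc : (nsq (M *ᵥ (W *ᵥ t)) : ℂ)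
      = ∑ i, ((hH.eigenvalues i : ℂ) * (Complex.normSq (t i) : ℂ)) := by
    have hsp : Mᴴ * M = W * diagonal (RCLike.ofReal ∘ hH.eigenvalues) * star W :=
      hH.spectral_theorem
    rw [nsq_mulVec_eq_dot]
    conv_lhs => rw [hsp]
    rw [mulVec_mulVec, mul_assoc, mul_assoc, (Matrix.mem_unitaryGroup_iff').mp hWu, mul_one,
      ← mulVec_mulVec]
    rw [unitary_dot W hWu]
    simp only [mulVec_diagonal, dotProduct, Pi.star_apply, Function.comp_apply,
      Complex.star_def]
    refine Finset.sum_congr rfl fun i _ => ?_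
    push_cast [Complex.normSq_eq_conj_mul_self]
    rw [show ((RCLike.ofReal : ℝ → ℂ) (hH.eigenvalues i)) = ((hH.eigenvalues i : ℝ) : ℂ) from rfl]
    ring
  have := congrArg Complex.re hc
  simpa using this

lemma eig_nonneg (M : Matrix m m ℂ) (i : m) :
    0 ≤ (isHermitian_conjTranspose_mul_self M).eigenvalues i := by
  have h := key1 M (Pi.single i 1)
  have hs : ∑ k, (isHermitian_conjTranspose_mul_self M).eigenvalues k *
      Complex.normSq ((Pi.single i 1 : m → ℂ) k)
      = (isHermitian_conjTranspose_mul_self M).eigenvalues i := by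
    rw [Finset.sum_eq_single_of_mem i (Finset.mem_univ i)]
    · simp
    · intro k _ hk
      simp [Pi.single_eq_of_ne hk]
  rw [hs] at h
  rw [← h]
  exact nsq_nonneg _

lemma rayleigh_min [Nonempty m] (M : Matrix m m ℂ) (x : m → ℂ) :
    ∃ i, (isHermitian_conjTranspose_mul_self M).eigenvalues i * nsq x ≤ nsq (M *ᵥ x) := by
  set hH := isHermitian_conjTranspose_mul_self M with hHdef
  set W : Matrix m m ℂ := ((hH.eigenvectorUnitary : unitaryGroup m ℂ) : Matrix m m ℂ) with hW
  have hWu : W ∈ Matrix.unitaryGroup m ℂ := (hH.eigenvectorUnitary).2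
  set t := star W *ᵥ x with ht
  have hx : W *ᵥ t = x := by
    rw [ht, mulVec_mulVec, (Matrix.mem_unitaryGroup_iff).mp hWu, one_mulVec]
  obtain ⟨i₀, -, hi₀⟩ := Finset.exists_min_image Finset.univ hH.eigenvalues
    ⟨Classical.arbitrary m, Finset.mem_univ _⟩
  refine ⟨i₀, ?_⟩
  have h1 : nsq (M *ᵥ x) = ∑ i, hH.eigenvalues i * Complex.normSq (t i) := by
    conv_lhs => rw [← hx]
    exact key1 M t
  have h2 : nsq x = ∑ i, Complex.normSq (t i) := by
    conv_lhs => rw [← hx]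
    rw [nsq_mulVec_unitary W hWu]
    rfl
  rw [h1, h2, Finset.mul_sum]
  exact Finset.sum_le_sum fun i _ =>
    mul_le_mul_of_nonneg_right (hi₀ i (Finset.mem_univ i)) (Complex.normSq_nonneg _)

lemma sum_pair_support (g : m → ℝ) {i j : m} (hij : i ≠ j) (h : ∀ k, k ≠ i → k ≠ j → g k = 0) :
    ∑ k, g k = g i + g j := by
  rw [← Finset.sum_pair hij]
  refine (Finset.sum_subset (Finset.subset_univ _) fun k _ hk => ?_).symm
  simp only [Finset.mem_insert, Finset.mem_singleton] at hk
  push_neg at hk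
  exact h k hk.1 hk.2

lemma two_eigen (M : Matrix m m ℂ) (vn : m → ℂ) {i j : m} (hij : i ≠ j) :
    ∃ x : m → ℂ, 0 < nsq x ∧ star vn ⬝ᵥ x = 0 ∧
      nsq (M *ᵥ x) ≤ max ((isHermitian_conjTranspose_mul_self M).eigenvalues i)
        ((isHermitian_conjTranspose_mul_self M).eigenvalues j) * nsq x := by
  set hH := isHermitian_conjTranspose_mul_self M with hHdef
  set W : Matrix m m ℂ := ((hH.eigenvectorUnitary : unitaryGroup m ℂ) : Matrix m m ℂ) with hW
  have hWu : W ∈ Matrix.unitaryGroup m ℂ := (hH.eigenvectorUnitary).2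
  set c := star vn ᵥ* W with hc
  set μ := hH.eigenvalues with hμ
  -- choose the coefficient vector t
  obtain ⟨t, ht0, htc, hti⟩ : ∃ t : m → ℂ, 0 < nsq t ∧ c ⬝ᵥ t = 0 ∧
      (∀ k, k ≠ i → k ≠ j → t k = 0) := by
    by_cases hci : c i = 0
    · refine ⟨Pi.single i 1, ?_, ?_, ?_⟩
      · have : nsq (Pi.single i (1:ℂ)) = 1 := by
          rw [nsq, sum_pair_support _ hij]
          · simp [Pi.single_eq_of_ne hij.symm]
          · intro k hk _; simp [Pi.single_eq_of_ne hk]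
        rw [this]; norm_num
      · rw [dotProduct_single, mul_one, hci]
      · intro k hk _; exact Pi.single_eq_of_ne hk 1
    · refine ⟨(Pi.single i (c j) - Pi.single j (c i) : m → ℂ), ?_, ?_, ?_⟩
      · have hj' : (Pi.single i (c j) - Pi.single j (c i) : m → ℂ) j = - c i := by
          simp [Pi.single_eq_of_ne hij.symm]
        have : 0 < Complex.normSq ((Pi.single i (c j) - Pi.single j (c i) : m → ℂ) j) := by
          rw [hj']
          simpa [Complex.normSq_pos] using hci
        refine lt_of_lt_of_le this ?_
        rw [nsq]
        exact Finset.single_le_sum (fun k _ => Complex.normSq_nonneg _) (Finset.mem_univ j)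
      · rw [dotProduct_sub, dotProduct_single, dotProduct_single]; ring
      · intro k hk1 hk2; simp [Pi.single_eq_of_ne hk1, Pi.single_eq_of_ne hk2]
  refine ⟨W *ᵥ t, ?_, ?_, ?_⟩
  · rwa [nsq_mulVec_unitary W hWu]
  · rw [dotProduct_mulVec, ← hc, htc]
  · rw [key1 M t, nsq_mulVec_unitary W hWu]
    have hsum : ∀ g : m → ℝ, (∀ k, k ≠ i → k ≠ j → g k = 0) → ∑ k, g k = g i + g j :=
      fun g hg => sum_pair_support g hij hg
    rw [hsum (fun k => μ k * Complex.normSq (t k)) (fun k h1 h2 => by simp [hti k h1 h2]),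
      show nsq t = Complex.normSq (t i) + Complex.normSq (t j) from
        hsum (fun k => Complex.normSq (t k)) (fun k h1 h2 => by simp [hti k h1 h2])]
    have h1 : μ i ≤ max (μ i) (μ j) := le_max_left _ _
    have h2 : μ j ≤ max (μ i) (μ j) := le_max_right _ _
    nlinarith [Complex.normSq_nonneg (t i), Complex.normSq_nonneg (t j)]

end Helpers

set_option maxHeartbeats 2000000 in
/-- a disk condition about an eigenvalue guaranteeing membership in
`S_ε(A)` (relative distance of the resolvent to the nearest rank-one matrix ≤ ε). -/
theorem disk_in_Sset_bound {n : ℕ} (hn : 1 ≤ n)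
    (U V : Matrix (Fin (n + 1)) (Fin (n + 1)) ℂ)
    (hU : U ∈ Matrix.unitaryGroup (Fin (n + 1)) ℂ)
    (hV : V ∈ Matrix.unitaryGroup (Fin (n + 1)) ℂ)
    (σ : Fin (n + 1) → ℝ)
    (hσlast : σ (Fin.last n) = 0)
    (hσpos : ∀ i : Fin (n + 1), i ≠ Fin.last n → 0 < σ i)
    (hσdec : ∀ i j : Fin (n + 1), i ≤ j → σ j ≤ σ i)
    (A₀ : Matrix (Fin (n + 1)) (Fin (n + 1)) ℂ)
    (hA₀ : A₀ = U * Matrix.diagonal (fun i => (σ i : ℂ)) * Vᴴ)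
    (P : Matrix (Fin (n + 1)) (Fin (n + 1)) ℂ)
    (hP : P = V * Matrix.diagonal (fun i => if i = Fin.last n then 0 else ((σ i : ℂ))⁻¹) * Uᴴ)
    (un vn : Fin (n + 1) → ℂ)
    (hun : un = fun i => U i (Fin.last n))
    (hvn : vn = fun i => V i (Fin.last n))
    (A : Matrix (Fin (n + 1)) (Fin (n + 1)) ℂ) (lam : ℂ)
    (hA : A₀ = A - lam • 1)
    (ε : ℝ) (hε : ε ∈ Set.Ioo (0 : ℝ) 1) (z : ℂ)
    (hz1 : ‖z - lam‖ < σ ⟨n - 1, by omega⟩)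
    (hz2 : ‖z - lam‖ *
        (‖star un ⬝ᵥ vn‖ + ‖z - lam‖ / σ ⟨n - 1, by omega⟩) ≤
        ε * (σ ⟨n - 1, by omega⟩ - ‖z - lam‖)) :
    sval (A - z • 1) (n + 1) / sval (A - z • 1) n ≤ ε := by
  obtain ⟨hε0, hε1⟩ := hε
  set w : ℂ := z - lam with hw
  set i₂ : Fin (n + 1) := ⟨n - 1, by omega⟩ with hi₂
  set σ₂ : ℝ := σ i₂ with hσ₂
  have hi₂ne : i₂ ≠ Fin.last n := by
    intro hcon
    have := congrArg Fin.val hcon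
    simp [hi₂, Fin.last] at this
    omega
  have hσ₂pos : 0 < σ₂ := hσpos i₂ hi₂ne
  have hσ₂le : ∀ i : Fin (n + 1), i ≠ Fin.last n → σ₂ ≤ σ i := by
    intro i hi
    apply hσdec i i₂
    rw [Fin.le_def]
    have h1 : i.val ≠ n := fun h => hi (Fin.ext h)
    have h2 : i.val < n + 1 := i.isLt
    simp only [hi₂]
    omega
  have haw : ‖w‖ < σ₂ := hz1
  set c : ℝ := σ₂ - ‖w‖ with hc
  have hcpos : 0 < c := by rw [hc]; linarith
  set Mz := A - z • (1 : Matrix (Fin (n + 1)) (Fin (n + 1)) ℂ) with hMzdef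
  have hMz : Mz = A₀ - w • 1 := by
    rw [hMzdef, hA, hw, sub_smul]; abel
  have hUs : Uᴴ ∈ Matrix.unitaryGroup (Fin (n + 1)) ℂ := by
    rw [← Matrix.star_eq_conjTranspose]; exact Unitary.star_mem hU
  have hVs : Vᴴ ∈ Matrix.unitaryGroup (Fin (n + 1)) ℂ := by
    rw [← Matrix.star_eq_conjTranspose]; exact Unitary.star_mem hV
  have hVHV : Vᴴ * V = 1 := by
    rw [← Matrix.star_eq_conjTranspose]; exact (Matrix.mem_unitaryGroup_iff').mp hV
  have hUUH : U * Uᴴ = 1 := by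
    rw [← Matrix.star_eq_conjTranspose]; exact (Matrix.mem_unitaryGroup_iff).mp hU
  set e : Fin (n + 1) → ℂ := Pi.single (Fin.last n) 1 with he
  have hse : star e = e := by
    rw [he]; funext i; simp [Pi.single_apply, apply_ite]
  have hvnV : vn = V *ᵥ e := by rw [hvn, he]; funext i; simp
  have hunU : un = U *ᵥ e := by rw [hun, he]; funext i; simp
  have hnsq_e : nsq e = 1 := by
    rw [he, nsq]
    have hterm : ∀ i : Fin (n + 1), Complex.normSq ((Pi.single (Fin.last n) 1 :
        Fin (n + 1) → ℂ) i) = if i = Fin.last n then 1 else 0 := fun i => by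
      simp [Pi.single_apply, apply_ite]
    simp only [hterm]
    simp
  have hnsq_vn : nsq vn = 1 := by rw [hvnV, nsq_mulVec_unitary V hV, hnsq_e]
  have hnsq_un : nsq un = 1 := by rw [hunU, nsq_mulVec_unitary U hU, hnsq_e]
  set g := Uᴴ *ᵥ vn with hg
  have hnsq_g : nsq g = 1 := by rw [hg, nsq_mulVec_unitary _ hUs, hnsq_vn]
  set γ := star un ⬝ᵥ vn with hγ
  have hglast : g (Fin.last n) = γ := by
    rw [hg, hγ, hun]
    simp [mulVec, dotProduct, conjTranspose_apply]
  set D : Fin (n + 1) → ℂ := fun i => if i = Fin.last n then 0 else ((σ i : ℂ))⁻¹ with hD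
  set h : Fin (n + 1) → ℂ := fun i => D i * g i with hh
  set r := P *ᵥ vn with hr
  have hrV : r = V *ᵥ h := by
    rw [hr, hP, ← Matrix.mulVec_mulVec, ← Matrix.mulVec_mulVec, ← hg]
    have hDg : Matrix.diagonal D *ᵥ g = h := by
      funext i
      rw [mulVec_diagonal, hh]
    rw [hDg]
  have hVHvn : Vᴴ *ᵥ vn = e := by
    rw [hvnV, Matrix.mulVec_mulVec, hVHV, one_mulVec]
  have hstar_vn_V : star vn ᵥ* V = star e := by
    have h1 := congrArg star hVHvn
    rwa [star_mulVec, conjTranspose_conjTranspose] at h1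
  have horl : star vn ⬝ᵥ r = 0 := by
    rw [hrV, dotProduct_mulVec, hstar_vn_V, hse, he, single_dotProduct, one_mul, hh]
    simp [hD]
  have hnsq_r : nsq r ≤ σ₂⁻¹ ^ 2 := by
    rw [hrV, nsq_mulVec_unitary V hV]
    have hterm : ∀ i, Complex.normSq (h i) ≤ σ₂⁻¹ ^ 2 * Complex.normSq (g i) := by
      intro i
      rw [hh]
      simp only []
      rw [Complex.normSq_mul]
      apply mul_le_mul_of_nonneg_right _ (Complex.normSq_nonneg _)
      rw [hD]
      by_cases hi : i = Fin.last n
      · simp only [if_pos hi, Complex.normSq_zero]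
        positivity
      · simp only [if_neg hi]
        rw [← Complex.ofReal_inv, Complex.normSq_ofReal]
        have h1 : σ₂ ≤ σ i := hσ₂le i hi
        have h2 : (σ i)⁻¹ ≤ σ₂⁻¹ := by
          apply inv_anti₀ hσ₂pos h1
        have h3 : 0 ≤ (σ i)⁻¹ := le_of_lt (inv_pos.mpr (lt_of_lt_of_le hσ₂pos h1))
        nlinarith
    calc nsq h ≤ ∑ i, σ₂⁻¹ ^ 2 * Complex.normSq (g i) :=
          Finset.sum_le_sum fun i _ => hterm i
      _ = σ₂⁻¹ ^ 2 * nsq g := by rw [nsq, Finset.mul_sum]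
      _ = σ₂⁻¹ ^ 2 := by rw [hnsq_g, mul_one]
  have hA₀vn : A₀ *ᵥ vn = 0 := by
    rw [hA₀, ← Matrix.mulVec_mulVec, hVHvn, ← Matrix.mulVec_mulVec, he,
      diagonal_mulVec_single]
    rw [show ((σ (Fin.last n) : ℂ) * 1) = 0 by rw [hσlast]; simp]
    simp
  have hSh : Matrix.diagonal (fun i => (σ i : ℂ)) *ᵥ h = g - Pi.single (Fin.last n) γ := by
    funext i
    rw [mulVec_diagonal, hh]
    simp only [Pi.sub_apply]
    by_cases hi : i = Fin.last n
    · subst hi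
      simp [hD, hglast]
    · rw [hD]
      simp only [if_neg hi, Pi.single_eq_of_ne hi, sub_zero]
      have hσi : (σ i : ℂ) ≠ 0 := by
        exact_mod_cast (hσpos i hi).ne'
      field_simp
  have hUg : U *ᵥ g = vn := by rw [hg, Matrix.mulVec_mulVec, hUUH, one_mulVec]
  have hA₀r : A₀ *ᵥ r = vn - γ • un := by
    rw [hrV, hA₀, Matrix.mulVec_mulVec, mul_assoc, hVHV, mul_one, ← Matrix.mulVec_mulVec,
      hSh, Matrix.mulVec_sub, hUg, mulVec_single]
    congr 1
    funext i
    rw [hun]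
    simp [mul_comm]
  set x₀ := vn + w • r with hx₀
  have hMzx₀ : Mz *ᵥ x₀ = -((w * γ) • un) - (w * w) • r := by
    rw [hMz, sub_mulVec, Matrix.smul_mulVec, one_mulVec, hx₀, mulVec_add,
      mulVec_smul, hA₀vn, hA₀r]
    module
  set B : ℝ := ‖w‖ * (‖γ‖ + ‖w‖ / σ₂) with hB
  have hBnonneg : 0 ≤ B := by
    rw [hB]
    exact mul_nonneg (norm_nonneg w) (add_nonneg (norm_nonneg γ)
      (div_nonneg (norm_nonneg w) hσ₂pos.le))
  have hNun : Nrm un = 1 := by rw [Nrm, hnsq_un, Real.sqrt_one]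
  have hNr : Nrm r ≤ σ₂⁻¹ := by
    rw [Nrm]
    calc Real.sqrt (nsq r) ≤ Real.sqrt (σ₂⁻¹ ^ 2) := Real.sqrt_le_sqrt hnsq_r
      _ = σ₂⁻¹ := Real.sqrt_sq (by positivity)
  have hNrz : Nrm (Mz *ᵥ x₀) ≤ B := by
    rw [hMzx₀]
    have heq : -((w * γ) • un) - (w * w) • r = -(((w * γ) • un) + (w * w) • r) := by module
    rw [heq, show Nrm (-(((w * γ) • un) + (w * w) • r)) =
        Nrm (((w * γ) • un) + (w * w) • r) from Nrm_neg _]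
    calc Nrm (((w * γ) • un) + (w * w) • r) ≤ Nrm ((w * γ) • un) + Nrm ((w * w) • r) :=
          Nrm_add_le _ _
      _ = ‖(w * γ)‖ * Nrm un + ‖(w * w)‖ * Nrm r := by
          rw [Nrm_smul, Nrm_smul]
      _ ≤ ‖w‖ * ‖γ‖ * 1 + ‖w‖ * ‖w‖ * σ₂⁻¹ := by
          rw [norm_mul, norm_mul, hNun]
          have h1 : 0 ≤ ‖w‖ * ‖w‖ := by positivity
          nlinarith [Nrm_nonneg r, hNr, norm_nonneg w, norm_nonneg γ]
      _ = B := by rw [hB]; field_simp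
  have horth2 : star vn ⬝ᵥ (w • r) = 0 := by
    rw [dotProduct_smul, horl, smul_zero]
  have hx₀nsq : 1 ≤ nsq x₀ := by
    rw [hx₀, nsq_add_of_orth _ _ horth2, hnsq_vn]
    have := nsq_nonneg (w • r)
    linarith
  obtain ⟨i₀, hi₀⟩ := rayleigh_min Mz x₀
  have hμnonneg : ∀ i, 0 ≤ (isHermitian_conjTranspose_mul_self Mz).eigenvalues i := fun i =>
    eig_nonneg Mz i
  have hmin : Real.sqrt ((isHermitian_conjTranspose_mul_self Mz).eigenvalues i₀) ≤ B := by
    have h2 : nsq (Mz *ᵥ x₀) ≤ B ^ 2 := by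
      rw [nsq_eq_sq]
      exact pow_le_pow_left₀ (Nrm_nonneg _) hNrz 2
    have h1 : (isHermitian_conjTranspose_mul_self Mz).eigenvalues i₀ ≤ B ^ 2 := by
      have h3 := le_mul_of_one_le_right (hμnonneg i₀) hx₀nsq
      exact le_trans (le_trans h3 hi₀) h2
    calc Real.sqrt ((isHermitian_conjTranspose_mul_self Mz).eigenvalues i₀)
        ≤ Real.sqrt (B ^ 2) := Real.sqrt_le_sqrt h1
      _ = B := Real.sqrt_sq hBnonneg
  -- lower bound for vectors orthogonal to vn
  have hlow : ∀ x : Fin (n + 1) → ℂ, star vn ⬝ᵥ x = 0 →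
      σ₂ ^ 2 * nsq x ≤ nsq (A₀ *ᵥ x) := by
    intro x hx
    set y := Vᴴ *ᵥ x with hy
    have hylast : y (Fin.last n) = 0 := by
      rw [hy, ← hx, hvn]
      simp [mulVec, dotProduct, conjTranspose_apply]
    have hAx : A₀ *ᵥ x = U *ᵥ (Matrix.diagonal (fun i => (σ i : ℂ)) *ᵥ y) := by
      rw [hA₀, hy, ← Matrix.mulVec_mulVec, ← Matrix.mulVec_mulVec]
    have hnx : nsq x = nsq y := (nsq_mulVec_unitary Vᴴ hVs x).symm
    rw [hAx, nsq_mulVec_unitary U hU, hnx]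
    rw [show nsq (Matrix.diagonal (fun i => (σ i : ℂ)) *ᵥ y)
        = ∑ i, Complex.normSq ((σ i : ℂ) * y i) from by
      rw [nsq]; exact Finset.sum_congr rfl fun i _ => by rw [mulVec_diagonal]]
    rw [nsq, Finset.mul_sum]
    refine Finset.sum_le_sum fun i _ => ?_
    by_cases hi : i = Fin.last n
    · subst hi
      rw [hylast]
      simp
    · rw [Complex.normSq_mul, Complex.normSq_ofReal]
      have h1 : σ₂ ≤ σ i := hσ₂le i hi
      have h2 : σ₂ ^ 2 ≤ σ i * σ i := by nlinarith
      exact mul_le_mul_of_nonneg_right h2 (Complex.normSq_nonneg _)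
  have hsecond : ∀ i j : Fin (n + 1), i ≠ j →
      c ≤ Real.sqrt ((isHermitian_conjTranspose_mul_self Mz).eigenvalues i) ∨
      c ≤ Real.sqrt ((isHermitian_conjTranspose_mul_self Mz).eigenvalues j) := by
    intro i j hij
    by_contra hcon
    push_neg at hcon
    obtain ⟨hic, hjc⟩ := hcon
    obtain ⟨x, hx0, hxorth, hxle⟩ := two_eigen Mz vn hij
    have hμi : (isHermitian_conjTranspose_mul_self Mz).eigenvalues i < c ^ 2 := by
      nlinarith [Real.sq_sqrt (hμnonneg i), Real.sqrt_nonneg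
        ((isHermitian_conjTranspose_mul_self Mz).eigenvalues i)]
    have hμj : (isHermitian_conjTranspose_mul_self Mz).eigenvalues j < c ^ 2 := by
      nlinarith [Real.sq_sqrt (hμnonneg j), Real.sqrt_nonneg
        ((isHermitian_conjTranspose_mul_self Mz).eigenvalues j)]
    have hmax : max ((isHermitian_conjTranspose_mul_self Mz).eigenvalues i)
        ((isHermitian_conjTranspose_mul_self Mz).eigenvalues j) < c ^ 2 := max_lt hμi hμj
    have hA₀x : σ₂ * Nrm x ≤ Nrm (A₀ *ᵥ x) := by
      have h2 : Real.sqrt (σ₂ ^ 2 * nsq x) ≤ Real.sqrt (nsq (A₀ *ᵥ x)) :=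
        Real.sqrt_le_sqrt (hlow x hxorth)
      rwa [Real.sqrt_mul (sq_nonneg σ₂), Real.sqrt_sq hσ₂pos.le] at h2
    have hMzx : Mz *ᵥ x = A₀ *ᵥ x - w • x := by
      rw [hMz, sub_mulVec, Matrix.smul_mulVec, one_mulVec]
    have h1 : c * Nrm x ≤ Nrm (Mz *ᵥ x) := by
      have h3 := Nrm_sub_ge (A₀ *ᵥ x) (w • x)
      rw [← hMzx, Nrm_smul] at h3
      rw [hc]
      nlinarith [Nrm_nonneg x]
    have h2 : c ^ 2 * nsq x ≤ nsq (Mz *ᵥ x) := by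
      rw [nsq_eq_sq x, nsq_eq_sq (Mz *ᵥ x)]
      have h5 : 0 ≤ c * Nrm x := mul_nonneg hcpos.le (Nrm_nonneg x)
      calc c ^ 2 * Nrm x ^ 2 = (c * Nrm x) ^ 2 := by ring
        _ ≤ Nrm (Mz *ᵥ x) ^ 2 := pow_le_pow_left₀ h5 h1 2
    have h4 := mul_lt_mul_of_pos_right hmax hx0
    linarith
  -- extract the two smallest entries of the sorted list
  obtain ⟨x, y, rest, hxy⟩ : ∃ x y rest, svalsList Mz = x :: y :: rest := by
    have hlen := svalsList_length Mz
    rw [Fintype.card_fin] at hlen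
    rcases hL : svalsList Mz with _ | ⟨x, tl⟩
    · rw [hL] at hlen; simp at hlen
    · rcases tl with _ | ⟨y, rest⟩
      · rw [hL] at hlen
        simp only [List.length_cons, List.length_nil] at hlen
        omega
      · exact ⟨x, y, rest, rfl⟩
  have hsx : sval Mz (n + 1) = x := by
    simp [sval, Fintype.card_fin, hxy]
  have hsy : sval Mz n = y := by
    simp only [sval, Fintype.card_fin, hxy]
    rw [show n + 1 - n = 1 by omega]
    rfl
  have hsort := svalsList_sorted Mz
  rw [hxy] at hsort
  have hsort' := List.pairwise_cons.mp hsort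
  have hxy_le : x ≤ y := hsort'.1 y (by simp)
  have hxB : x ≤ B := by
    have hm : Real.sqrt ((isHermitian_conjTranspose_mul_self Mz).eigenvalues i₀) ∈ svalsList Mz :=
      mem_svalsList.mpr ⟨i₀, rfl⟩
    rw [hxy] at hm
    rcases List.mem_cons.mp hm with h1 | h1
    · rw [← h1]; exact hmin
    · exact le_trans (hsort'.1 _ h1) hmin
  have hyc : c ≤ y := by
    by_contra hyc
    push_neg at hyc
    have hxc : x < c := lt_of_le_of_lt hxy_le hyc
    have h2 : 2 ≤ (Finset.univ.filter fun i =>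
        Real.sqrt ((isHermitian_conjTranspose_mul_self Mz).eigenvalues i) < c).card := by
      rw [← svalsList_countP Mz (fun a => a < c), hxy]
      rw [show ((x :: y :: rest : List ℝ) : Multiset ℝ) = x ::ₘ y ::ₘ (rest : Multiset ℝ)
        from rfl]
      rw [Multiset.countP_cons, Multiset.countP_cons, if_pos hxc, if_pos hyc]
      omega
    obtain ⟨i, hi, j, hj, hij⟩ := Finset.one_lt_card.mp (lt_of_lt_of_le one_lt_two h2)
    simp only [Finset.mem_filter] at hi hj
    rcases hsecond i j hij with h1 | h1
    · exact absurd hi.2 (not_lt.mpr h1)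
    · exact absurd hj.2 (not_lt.mpr h1)
  have hy0 : 0 < y := lt_of_lt_of_le hcpos hyc
  rw [hsx, hsy, div_le_iff₀ hy0]
  have hBεc : B ≤ ε * c := hz2
  calc x ≤ B := hxB
    _ ≤ ε * c := hBεc
    _ ≤ ε * y := mul_le_mul_of_nonneg_left hyc hε0.le
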